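/- Every ∂_F-delta operator reduces the degree of any polynomial by one: if Q is a ∂_F-delta operator and p ∈ K[x] has degree n ≥ 1, then Q(p) has degree n − 1. -/
import Mathlib


open Polynomial Finset

/-- F-factorial: `Ffact n = F_n · F_{n-1} ··· F_1`, with `Ffact 0 = 1`. -/
def Ffact (n : ℕ) : ℕ := ∏ i ∈ Finset.range n, Nat.fib (i + 1)

/-- Fibonomial coefficient `C_F(n,k) = F_n!/(F_k!·F_{n−k}!)`, taken in a field `K`. -/
noncomputable def fibnom (K : Type*) [Field K] (n k : ℕ) : K :=
  (Ffact n : K) / ((Ffact k : K) * (Ffact (n - k) : K))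

variable (K : Type*) [Field K] [CharZero K]

/-- The F-derivative `∂_F`, the linear operator with `∂_F x^n = F_n x^{n-1}`. -/
noncomputable def fderivF : Module.End K (Polynomial K) :=
  Polynomial.lsum fun n => (Nat.fib n : K) • (Polynomial.monomial (n - 1) : K →ₗ[K] Polynomial K)

/-- The F-translation operator `E^y(∂_F) = Σ_{k≥0} (y^k/F_k!) ∂_F^k`; since `∂_F`
strictly decreases degree, the sum truncated at `natDegree p + 1` is the full sum. -/
noncomputable def Etrans (y : K) (p : Polynomial K) : Polynomial K :=
  ∑ k ∈ Finset.range (p.natDegree + 1), (y ^ k / (Ffact k : K)) • ((fderivF K ^ k) p)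

/-- A linear operator on `K[x]` is `∂_F`-shift invariant iff it commutes with every
F-translation operator `E^y(∂_F)`. -/
def ShiftInv (T : Module.End K (Polynomial K)) : Prop :=
  ∀ (y : K) (p : Polynomial K), T (Etrans K y p) = Etrans K y (T p)

/-- A `∂_F`-delta operator: a `∂_F`-shift invariant operator `Q` with `Q x` a nonzero
constant. -/
def DeltaOp (Q : Module.End K (Polynomial K)) : Prop :=
  ShiftInv K Q ∧ ∃ c : K, c ≠ 0 ∧ Q Polynomial.X = Polynomial.C c

/-- `(q_n)` is the `∂_F`-basic polynomial sequence of `Q`. -/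
def BasicSeq (Q : Module.End K (Polynomial K)) (q : ℕ → Polynomial K) : Prop :=
  (∀ n : ℕ, (q n).degree = n) ∧ q 0 = 1 ∧ (∀ n : ℕ, 1 ≤ n → (q n).eval 0 = 0) ∧
    ∀ n : ℕ, 1 ≤ n → Q (q n) = (Nat.fib n : K) • q (n - 1)

/-- The operator `x̂_F`, with `x̂_F x^n = ((n+1)/F_{n+1}) x^{n+1}`. -/
noncomputable def xF : Module.End K (Polynomial K) :=
  Polynomial.lsum fun n =>
    (((n : K) + 1) / (Nat.fib (n + 1) : K)) • (Polynomial.monomial (n + 1) : K →ₗ[K] Polynomial K)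

/-- The Graves–Pincherle F-derivative `T' = T∘x̂_F − x̂_F∘T`. -/
noncomputable def GPderiv (T : Module.End K (Polynomial K)) : Module.End K (Polynomial K) :=
  T * xF K - xF K * T

/-- `T = Σ_{k≥0} (a_k/F_k!) Q^k`, expressed via truncations: since a delta operator `Q`
strictly decreases degree, `Q^k p = 0` for `k > natDegree p`, so the truncated sums agree. -/
def OpSumRep (Q : Module.End K (Polynomial K)) (a : ℕ → K) (T : Module.End K (Polynomial K)) : Prop :=
  ∀ (p : Polynomial K) (N : ℕ), p.natDegree < N →
    T p = ∑ k ∈ Finset.range N, (a k / (Ffact k : K)) • ((Q ^ k) p)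

/-- `(s_n)` is a sequence of Sheffer F-polynomials of `Q`. -/
def ShefferSeq (Q : Module.End K (Polynomial K)) (s : ℕ → Polynomial K) : Prop :=
  (∀ n : ℕ, (s n).degree = n) ∧ (∃ c : K, c ≠ 0 ∧ s 0 = Polynomial.C c) ∧
    ∀ n : ℕ, 1 ≤ n → Q (s n) = (Nat.fib n : K) • s (n - 1)

lemma Ffact_cast_ne_zero (n : ℕ) : (Ffact n : K) ≠ 0 := by
  have : 0 < Ffact n := Finset.prod_pos fun i _ => Nat.fib_pos.2 (Nat.succ_pos i)
  exact_mod_cast this.ne'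

lemma coeff_fderivF (p : Polynomial K) (m : ℕ) :
    (fderivF K p).coeff m = (Nat.fib (m + 1) : K) * p.coeff (m + 1) := by
  rw [fderivF, Polynomial.lsum_apply, Polynomial.sum_def]
  rw [Polynomial.finset_sum_coeff]
  rw [Finset.sum_eq_single (m + 1)]
  · simp
  · intro n hn hne
    simp only [LinearMap.smul_apply, coeff_smul, coeff_monomial, smul_eq_mul]
    rcases Nat.eq_zero_or_pos n with h0 | h0
    · simp [h0]
    · rw [if_neg (by omega)]; ring
  · intro h
    have : p.coeff (m + 1) = 0 := Polynomial.notMem_support_iff.1 h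
    simp [this]

lemma coeff_fderivF_pow (k : ℕ) (p : Polynomial K) (m : ℕ) :
    ((fderivF K ^ k) p).coeff m =
      (∏ i ∈ Finset.range k, (Nat.fib (m + i + 1) : K)) * p.coeff (m + k) := by
  induction k generalizing m with
  | zero => simp
  | succ k ih =>
    rw [pow_succ', Module.End.mul_apply, coeff_fderivF, ih]
    rw [Finset.prod_range_succ']
    have h1 : (∏ i ∈ Finset.range k, (Nat.fib (m + 1 + i + 1) : K)) =
        ∏ i ∈ Finset.range k, (Nat.fib (m + (i + 1) + 1) : K) :=
      Finset.prod_congr rfl fun i _ => by congr 2; omega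
    have h2 : m + 1 + k = m + (k + 1) := by omega
    rw [h1, h2]
    simp only [Nat.add_zero, Nat.zero_add]
    ring

lemma fderivF_pow_eq_zero {p : Polynomial K} {k : ℕ} (h : p.natDegree < k) :
    (fderivF K ^ k) p = 0 := by
  ext m
  rw [coeff_fderivF_pow]
  rw [Polynomial.coeff_eq_zero_of_natDegree_lt (by omega)]
  simp

lemma degree_fderivF_pow_le (k : ℕ) (p : Polynomial K) :
    ((fderivF K ^ k) p).degree ≤ ((p.natDegree - k : ℕ) : WithBot ℕ) := by
  apply Polynomial.degree_le_of_natDegree_le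
  apply Polynomial.natDegree_le_iff_coeff_eq_zero.2
  intro m hm
  rw [coeff_fderivF_pow, Polynomial.coeff_eq_zero_of_natDegree_lt (by omega), mul_zero]

lemma fib_cast_ne_zero {n : ℕ} (h : 1 ≤ n) : (Nat.fib n : K) ≠ 0 := by
  exact_mod_cast (Nat.fib_pos.2 h).ne'

lemma degree_fderivF {p : Polynomial K} (hp : p ≠ 0) (h1 : 1 ≤ p.natDegree) :
    (fderivF K p).degree = ((p.natDegree - 1 : ℕ) : WithBot ℕ) := by
  have hc : (fderivF K p).coeff (p.natDegree - 1) ≠ 0 := by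
    rw [coeff_fderivF]
    have he : p.natDegree - 1 + 1 = p.natDegree := by omega
    rw [he]
    exact mul_ne_zero (fib_cast_ne_zero K h1) (Polynomial.leadingCoeff_ne_zero.2 hp)
  have hle : (fderivF K p).natDegree ≤ p.natDegree - 1 := by
    have := degree_fderivF_pow_le K 1 p
    rw [pow_one] at this
    exact Polynomial.natDegree_le_iff_degree_le.2 this
  have hge : p.natDegree - 1 ≤ (fderivF K p).natDegree :=
    Polynomial.le_natDegree_of_ne_zero hc
  have hne : fderivF K p ≠ 0 := fun h => hc (by simp [h])
  rw [Polynomial.degree_eq_natDegree hne, le_antisymm hle hge]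

lemma fderivF_pow_X_pow {n k : ℕ} (hk : k ≤ n) :
    (fderivF K ^ k) (Polynomial.X ^ n : Polynomial K) =
      (∏ i ∈ Finset.range k, (Nat.fib (n - k + i + 1) : K)) • Polynomial.X ^ (n - k) := by
  ext m
  rw [coeff_fderivF_pow, Polynomial.coeff_smul, Polynomial.coeff_X_pow, Polynomial.coeff_X_pow]
  rcases eq_or_ne m (n - k) with h | h
  · subst h
    rw [if_pos (by omega), if_pos rfl]
    simp
  · rw [if_neg (by omega), if_neg (by omega)]
    simp

lemma prod_fib_ne_zero (a k : ℕ) : (∏ i ∈ Finset.range k, (Nat.fib (a + i + 1) : K)) ≠ 0 :=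
  Finset.prod_ne_zero_iff.2 fun i _ => fib_cast_ne_zero K (by omega)

lemma Ffact_zero : Ffact 0 = 1 := rfl

lemma Ffact_one : Ffact 1 = 1 := rfl

lemma Etrans_C (y c : K) : Etrans K y (Polynomial.C c) = Polynomial.C c := by
  rw [Etrans]
  simp [Ffact_zero]

lemma fderivF_X : fderivF K Polynomial.X = 1 := by
  ext m
  rw [coeff_fderivF]
  rcases eq_or_ne m 0 with h | h
  · simp [h]
  · simp [Polynomial.coeff_X, Polynomial.coeff_one, h, Ne.symm h]

lemma Etrans_X (y : K) : Etrans K y (Polynomial.X : Polynomial K) = Polynomial.X + Polynomial.C y := by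
  rw [Etrans]
  rw [show (Polynomial.X : Polynomial K).natDegree + 1 = 2 by simp]
  rw [Finset.sum_range_succ, Finset.sum_range_one]
  simp [Ffact_zero, Ffact_one, fderivF_X, Polynomial.smul_eq_C_mul]

lemma Q_one_eq_zero {Q : Module.End K (Polynomial K)} (hQ : DeltaOp K Q) :
    Q 1 = 0 := by
  obtain ⟨hsi, c, hc, hX⟩ := hQ
  have h := hsi 1 Polynomial.X
  rw [Etrans_X, hX, Etrans_C, map_add, hX] at h
  have : Q (Polynomial.C 1) = 0 := by
    rwa [add_eq_left] at h
  simpa using this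

lemma degree_smul_eq {e : K} (he : e ≠ 0) (p : Polynomial K) : (e • p).degree = p.degree := by
  rw [Polynomial.smul_eq_C_mul, Polynomial.degree_C_mul he]

lemma degree_Q_X_pow {Q : Module.End K (Polynomial K)} (hQ : DeltaOp K Q) :
    ∀ n : ℕ, 1 ≤ n → (Q (Polynomial.X ^ n)).degree = ((n - 1 : ℕ) : WithBot ℕ) := by
  intro n
  induction n using Nat.strong_induction_on with
  | _ n IH =>
  intro hn1
  have hQ1 : Q 1 = 0 := Q_one_eq_zero K hQ
  obtain ⟨hsi, c, hc, hXc⟩ := hQ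
  rcases eq_or_lt_of_le hn1 with h1 | h2
  · rw [← h1, pow_one, hXc]
    simp [Polynomial.degree_C hc]
  · -- n ≥ 2
    set r := Q (Polynomial.X ^ n) with hr
    have hsi' := hsi 1 (Polynomial.X ^ n)
    rw [Etrans, Etrans] at hsi'
    simp only [one_pow, Polynomial.natDegree_X_pow, map_sum, map_smul] at hsi'
    rw [Finset.sum_range_succ', Finset.sum_range_succ'] at hsi'
    simp only [pow_zero, Module.End.one_apply, Ffact_zero, Nat.cast_one, div_one, one_smul] at hsi'
    rw [← hr] at hsi'
    have key : (∑ k ∈ Finset.range n, (1 / (Ffact (k+1) : K)) • Q ((fderivF K ^ (k+1)) (Polynomial.X ^ n)))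
        = ∑ j ∈ Finset.range r.natDegree, (1 / (Ffact (j+1) : K)) • (fderivF K ^ (j+1)) r :=
      add_right_cancel hsi'
    -- degree of first term of LHS sum
    have ht0 : ((1 / (Ffact (0+1) : K)) • Q ((fderivF K ^ (0+1)) (Polynomial.X ^ n))).degree
        = ((n - 2 : ℕ) : WithBot ℕ) := by
      rw [fderivF_pow_X_pow K (by omega : 0 + 1 ≤ n), map_smul,
        degree_smul_eq K (one_div_ne_zero (Ffact_cast_ne_zero K _)),
        degree_smul_eq K (prod_fib_ne_zero K _ _), IH (n - (0+1)) (by omega) (by omega)]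
      exact congrArg _ (by omega)
    have hterm : ∀ k ∈ (Finset.range n).erase 0,
        ((1 / (Ffact (k+1) : K)) • Q ((fderivF K ^ (k+1)) (Polynomial.X ^ n))).degree
          < ((n - 2 : ℕ) : WithBot ℕ) := by
      intro k hk
      obtain ⟨hk0, hkn⟩ := Finset.mem_erase.1 hk
      rw [fderivF_pow_X_pow K (by rw [Finset.mem_range] at hkn; omega), map_smul]
      refine lt_of_le_of_lt (Polynomial.degree_smul_le _ _)
        (lt_of_le_of_lt (Polynomial.degree_smul_le _ _) ?_)
      rw [Finset.mem_range] at hkn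
      rcases eq_or_ne (n - (k+1)) 0 with h0 | h0
      · rw [h0, pow_zero, hQ1, Polynomial.degree_zero]
        exact WithBot.bot_lt_coe _
      · rw [IH (n - (k+1)) (by omega) (by omega)]
        exact_mod_cast (show n - (k+1) - 1 < n - 2 by omega)
    have hA : (∑ k ∈ Finset.range n,
        (1 / (Ffact (k+1) : K)) • Q ((fderivF K ^ (k+1)) (Polynomial.X ^ n))).degree
        = ((n - 2 : ℕ) : WithBot ℕ) := by
      rw [← Finset.add_sum_erase _ _ (Finset.mem_range.2 (by omega : 0 < n))]
      rw [Polynomial.degree_add_eq_left_of_degree_lt, ht0]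
      rw [ht0]
      refine lt_of_le_of_lt (Polynomial.degree_sum_le _ _) ?_
      exact Finset.sup_lt_iff (WithBot.bot_lt_coe _) |>.2 fun k hk => hterm k hk
    have hd1 : 1 ≤ r.natDegree := by
      by_contra h
      have hd0 : r.natDegree = 0 := by omega
      rw [hd0, Finset.range_zero, Finset.sum_empty] at key
      rw [key, Polynomial.degree_zero] at hA
      exact absurd hA.symm (by simp)
    have hr0 : r ≠ 0 := fun h => by
      rw [h, Polynomial.natDegree_zero] at hd1; omega
    have hB0 : ((1 / (Ffact (0+1) : K)) • (fderivF K ^ (0+1)) r).degree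
        = ((r.natDegree - 1 : ℕ) : WithBot ℕ) := by
      rw [show (0:ℕ)+1 = 1 from rfl, pow_one,
        degree_smul_eq K (one_div_ne_zero (Ffact_cast_ne_zero K _)),
        degree_fderivF K hr0 hd1]
    have hBterm : ∀ j ∈ (Finset.range r.natDegree).erase 0,
        ((1 / (Ffact (j+1) : K)) • (fderivF K ^ (j+1)) r).degree
          < ((r.natDegree - 1 : ℕ) : WithBot ℕ) := by
      intro j hj
      obtain ⟨hj0, hjn⟩ := Finset.mem_erase.1 hj
      rw [Finset.mem_range] at hjn
      refine lt_of_le_of_lt (Polynomial.degree_smul_le _ _) ?_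
      rcases lt_or_ge r.natDegree (j+1) with hlt | hle
      · rw [fderivF_pow_eq_zero K hlt, Polynomial.degree_zero]
        exact WithBot.bot_lt_coe _
      · refine lt_of_le_of_lt (degree_fderivF_pow_le K (j+1) r) ?_
        exact_mod_cast (show r.natDegree - (j+1) < r.natDegree - 1 by omega)
    have hB : (∑ j ∈ Finset.range r.natDegree,
        (1 / (Ffact (j+1) : K)) • (fderivF K ^ (j+1)) r).degree
        = ((r.natDegree - 1 : ℕ) : WithBot ℕ) := by
      rw [← Finset.add_sum_erase _ _ (Finset.mem_range.2 (by omega : 0 < r.natDegree))]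
      rw [Polynomial.degree_add_eq_left_of_degree_lt, hB0]
      rw [hB0]
      refine lt_of_le_of_lt (Polynomial.degree_sum_le _ _) ?_
      exact Finset.sup_lt_iff (WithBot.bot_lt_coe _) |>.2 hBterm
    rw [key, hB] at hA
    have hdn : r.natDegree - 1 = n - 2 := by exact_mod_cast hA
    rw [Polynomial.degree_eq_natDegree hr0]
    exact congrArg _ (by omega)

lemma degree_Q_lt {Q : Module.End K (Polynomial K)} (hQ : DeltaOp K Q) (q : Polynomial K) :
    (Q q).degree < ((q.natDegree : ℕ) : WithBot ℕ) := by
  have hmain : ∀ i ∈ Finset.range (q.natDegree + 1),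
      (Q (Polynomial.monomial i (q.coeff i))).degree < ((q.natDegree : ℕ) : WithBot ℕ) := by
    intro i hi
    rw [Finset.mem_range] at hi
    rcases eq_or_ne i 0 with rfl | hi0
    · rw [Polynomial.monomial_zero_left,
        show (Polynomial.C (q.coeff 0)) = (q.coeff 0) • (1 : Polynomial K) by
          rw [Polynomial.smul_eq_C_mul, mul_one],
        map_smul, Q_one_eq_zero K hQ, smul_zero, Polynomial.degree_zero]
      exact WithBot.bot_lt_coe _
    · rw [← Polynomial.smul_X_eq_monomial, map_smul]
      refine lt_of_le_of_lt (Polynomial.degree_smul_le _ _) ?_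
      rw [degree_Q_X_pow K hQ i (by omega)]
      exact_mod_cast (show i - 1 < q.natDegree by omega)
  calc (Q q).degree
      = (∑ i ∈ Finset.range (q.natDegree + 1), Q (Polynomial.monomial i (q.coeff i))).degree := by
        conv_lhs => rw [Polynomial.as_sum_range' q _ (lt_add_one _)]
        rw [map_sum]
    _ < _ := lt_of_le_of_lt (Polynomial.degree_sum_le _ _)
        (Finset.sup_lt_iff (WithBot.bot_lt_coe _) |>.2 hmain)

/-- every `∂_F`-delta operator reduces the degree of any polynomial by one. -/
theorem delta_reduces_degree (Q : Module.End K (Polynomial K)) (hQ : DeltaOp K Q)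
    (p : Polynomial K) (n : ℕ) (hn : 1 ≤ n) (hp : p.degree = n) :
    (Q p).degree = ((n - 1 : ℕ) : WithBot ℕ) := by
  have hn' : p.natDegree = n := Polynomial.natDegree_eq_of_degree_eq_some hp
  have hp0 : p ≠ 0 := fun h => by rw [h, Polynomial.degree_zero] at hp; simp at hp
  have heq : Q p = Q p.eraseLead + p.leadingCoeff • Q (Polynomial.X ^ n) := by
    conv_lhs => rw [← Polynomial.eraseLead_add_C_mul_X_pow p]
    rw [map_add, ← Polynomial.smul_eq_C_mul, map_smul, hn']
  have hsm : (p.leadingCoeff • Q (Polynomial.X ^ n)).degree = ((n - 1 : ℕ) : WithBot ℕ) := by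
    rw [degree_smul_eq K (Polynomial.leadingCoeff_ne_zero.2 hp0), degree_Q_X_pow K hQ n hn]
  rw [heq, Polynomial.degree_add_eq_right_of_degree_lt, hsm]
  rw [hsm]
  refine lt_of_lt_of_le (degree_Q_lt K hQ p.eraseLead) ?_
  exact_mod_cast le_trans (Polynomial.eraseLead_natDegree_le p) (by omega)
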